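/- arXiv:2304.00480 — 3 statements merged into one kernel-verified Lean document; each statement's English description precedes it below -/
import Mathlib

section
/- Conversely, if a smooth real function g defined on an open interval with nowhere-vanishing derivative satisfies S(g) = 0 identically, then g is a restriction of a Möbius transformation, i.e., there exist a, b, c, d with ad - bc ≠ 0 such that g(x) = (ax+b)/(cx+d) on the interval. -/
noncomputable def schwarzian (g : ℝ → ℝ) (x : ℝ) : ℝ :=
  deriv (deriv (deriv g)) x / deriv g x - 3 / 2 * (deriv (deriv g) x / deriv g x) ^ 2

lemma const_of_hasDerivAt_zero {s : Set ℝ} (hs : IsOpen s) (hconv : Convex ℝ s) {F : ℝ → ℝ}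
    (h : ∀ x ∈ s, HasDerivAt F 0 x) {x y : ℝ} (hx : x ∈ s) (hy : y ∈ s) : F x = F y := by
  refine hconv.is_const_of_fderivWithin_eq_zero
    (fun z hz => (h z hz).differentiableAt.differentiableWithinAt) (fun z hz => ?_) hx hy
  rw [fderivWithin_of_mem_nhds (hs.mem_nhds hz), (h z hz).hasFDerivAt.fderiv]
  ext t
  simp

lemma mobius_aux (s : Set ℝ) (hs : IsOpen s) (hconv : Convex ℝ s)
    {x₀ : ℝ} (hx₀ : x₀ ∈ s)
    (g : ℝ → ℝ) (hg : ContDiffOn ℝ (⊤ : ℕ∞) g s) (hg' : ∀ x ∈ s, 0 < deriv g x)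
    (hS : ∀ x ∈ s, schwarzian g x = 0) :
    ∃ a b c d : ℝ, a * d - b * c ≠ 0 ∧ ∀ x ∈ s, g x = (a * x + b) / (c * x + d) := by
  have hf : deriv g = deriv g := rfl
  set f := deriv g with hf
  have hg1 : ContDiffOn ℝ (⊤ : ℕ∞) f s := hg.deriv_of_isOpen hs (by simp)
  have hg2 : ContDiffOn ℝ (⊤ : ℕ∞) (deriv f) s := hg1.deriv_of_isOpen hs (by simp)
  have hdg : ∀ x ∈ s, HasDerivAt g (f x) x := fun x hx =>
    ((hg.differentiableOn (by simp)).differentiableAt (hs.mem_nhds hx)).hasDerivAt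
  have hdf : ∀ x ∈ s, HasDerivAt f (deriv f x) x := fun x hx =>
    ((hg1.differentiableOn (by simp)).differentiableAt (hs.mem_nhds hx)).hasDerivAt
  have hdf2 : ∀ x ∈ s, HasDerivAt (deriv f) (deriv (deriv f) x) x := fun x hx =>
    ((hg2.differentiableOn (by simp)).differentiableAt (hs.mem_nhds hx)).hasDerivAt
  -- the Schwarzian equation
  have hval : ∀ x ∈ s, deriv (deriv f) x * f x = 3 / 2 * (deriv f x) ^ 2 := by
    intro x hx
    have h := hS x hx
    have hfne : f x ≠ 0 := (hg' x hx).ne'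
    simp only [schwarzian, ← hf] at h
    field_simp at h
    have h2 : (deriv (deriv f) x * f x - 3 / 2 * (deriv f x) ^ 2) * f x = 0 := by
      linear_combination (f x / 2) * h
    rcases mul_eq_zero.1 h2 with h3 | h3
    · linarith
    · exact absurd h3 hfne
  set v : ℝ → ℝ := fun x => f x ^ (-(1/2) : ℝ) with hv
  -- v satisfies v'' = 0, so it is affine on s
  obtain ⟨c₀, d₀, hvx⟩ : ∃ c d : ℝ, ∀ x ∈ s, v x = c * x + d := by
    set V1 : ℝ → ℝ := fun x => deriv f x * (-(1/2)) * f x ^ ((-(1/2) : ℝ) - 1) with hV1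
    have hdv : ∀ x ∈ s, HasDerivAt v (V1 x) x := fun x hx =>
      (hdf x hx).rpow_const (Or.inl (hg' x hx).ne')
    have hkey : ∀ x ∈ s, HasDerivAt V1 0 x := by
      intro x hx
      have hfx := hg' x hx
      have hfne : f x ≠ 0 := hfx.ne'
      have h1 : HasDerivAt (fun y => deriv f y * (-(1/2) : ℝ))
          (deriv (deriv f) x * (-(1/2))) x := (hdf2 x hx).mul_const _
      have h2 : HasDerivAt (fun y => f y ^ ((-(1/2) : ℝ) - 1))
          (deriv f x * ((-(1/2) : ℝ) - 1) * f x ^ ((-(1/2) : ℝ) - 1 - 1)) x :=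
        (hdf x hx).rpow_const (Or.inl hfne)
      have h3 := h1.mul h2
      have e1 : f x ^ ((-(1/2) : ℝ) - 1) = f x ^ ((-(1/2) : ℝ) - 1 - 1) * f x := by
        rw [← Real.rpow_add_one hfne, sub_add_cancel]
      have e0 : deriv (deriv f) x * (-(1/2) : ℝ) * f x ^ ((-(1/2) : ℝ) - 1) +
          deriv f x * (-(1/2)) *
            (deriv f x * ((-(1/2) : ℝ) - 1) * f x ^ ((-(1/2) : ℝ) - 1 - 1)) = 0 := by
        rw [e1]
        linear_combination (-(1/2 : ℝ) * f x ^ ((-(1/2) : ℝ) - 1 - 1)) * hval x hx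
      rw [e0] at h3
      exact h3
    have hV1const : ∀ x ∈ s, V1 x = V1 x₀ := fun x hx =>
      const_of_hasDerivAt_zero hs hconv hkey hx hx₀
    refine ⟨V1 x₀, v x₀ - V1 x₀ * x₀, ?_⟩
    intro x hx
    have hF : ∀ y ∈ s, HasDerivAt (fun z => v z - V1 x₀ * z) 0 y := by
      intro y hy
      have h1 : HasDerivAt (fun z => V1 x₀ * z) (V1 x₀) y := by
        simpa using (hasDerivAt_id y).const_mul (V1 x₀)
      have h2 := (hdv y hy).sub h1
      rwa [hV1const y hy, sub_self] at h2
    have h := const_of_hasDerivAt_zero hs hconv hF hx hx₀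
    have h' : v x - V1 x₀ * x = v x₀ - V1 x₀ * x₀ := h
    linarith
  clear hS hg hg1 hg2 hdf hdf2
  have hpos : ∀ x ∈ s, 0 < c₀ * x + d₀ := by
    intro x hx
    rw [← hvx x hx]
    exact Real.rpow_pos_of_pos (hg' x hx) _
  have hfval : ∀ x ∈ s, f x = ((c₀ * x + d₀) ^ 2)⁻¹ := by
    intro x hx
    have hfx := hg' x hx
    have h2 : v x ^ 2 = (f x)⁻¹ := by
      rw [hv]
      simp only [sq]
      rw [← Real.rpow_add hfx]
      norm_num [Real.rpow_neg_one]
    rw [← hvx x hx, h2, inv_inv]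
  have hdg' : ∀ x ∈ s, HasDerivAt g (((c₀ * x + d₀) ^ 2)⁻¹) x := by
    intro x hx
    have := hdg x hx
    rwa [hfval x hx] at this
  clear hvx hfval hdg hg' hv hf
  by_cases hc : c₀ = 0
  · -- linear case
    subst hc
    have hd0 : 0 < d₀ := by have := hpos x₀ hx₀; simpa using this
    have hF : ∀ y ∈ s, HasDerivAt (fun z => g z - (d₀ ^ 2)⁻¹ * z) 0 y := by
      intro y hy
      have h1 : HasDerivAt (fun z => (d₀ ^ 2)⁻¹ * z) ((d₀ ^ 2)⁻¹) y := by
        simpa using (hasDerivAt_id y).const_mul ((d₀ ^ 2)⁻¹)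
      have h2 := (hdg' y hy).sub h1
      rw [zero_mul, zero_add, sub_self] at h2
      exact h2
    refine ⟨(d₀ ^ 2)⁻¹, g x₀ - (d₀ ^ 2)⁻¹ * x₀, 0, 1, ?_, ?_⟩
    · simpa using pow_ne_zero 2 hd0.ne'
    · intro x hx
      have h := const_of_hasDerivAt_zero hs hconv hF hx hx₀
      have h' : g x - (d₀ ^ 2)⁻¹ * x = g x₀ - (d₀ ^ 2)⁻¹ * x₀ := h
      simp only [zero_mul, zero_add, div_one]
      linarith
  · -- genuinely Möbius case
    obtain ⟨e, hgx⟩ : ∃ e : ℝ, ∀ x ∈ s, g x = e - (c₀ * (c₀ * x + d₀))⁻¹ := by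
      have hdφ : ∀ x ∈ s,
          HasDerivAt (fun y => -(c₀ * (c₀ * y + d₀))⁻¹) (((c₀ * x + d₀) ^ 2)⁻¹) x := by
        intro x hx
        have hne : c₀ * (c₀ * x + d₀) ≠ 0 := mul_ne_zero hc (hpos x hx).ne'
        have h1 : HasDerivAt (fun y => c₀ * (c₀ * y + d₀)) (c₀ * (c₀ * 1)) x :=
          (((hasDerivAt_id x).const_mul c₀).add_const d₀).const_mul c₀
        have h2 := (h1.inv hne).neg
        refine h2.congr_deriv ?_
        have hne2 : c₀ * x + d₀ ≠ 0 := (hpos x hx).ne'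
        rw [neg_div, neg_neg, mul_pow]
        field_simp
      have hF : ∀ y ∈ s, HasDerivAt (fun z => g z - -(c₀ * (c₀ * z + d₀))⁻¹) 0 y := by
        intro y hy
        have h2 := (hdg' y hy).sub (hdφ y hy)
        rw [sub_self] at h2
        exact h2
      refine ⟨g x₀ - -(c₀ * (c₀ * x₀ + d₀))⁻¹ + -(0:ℝ), ?_⟩
      intro x hx
      have h := const_of_hasDerivAt_zero hs hconv hF hx hx₀
      have h' : g x - -(c₀ * (c₀ * x + d₀))⁻¹ = g x₀ - -(c₀ * (c₀ * x₀ + d₀))⁻¹ := h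
      linarith
    refine ⟨e * c₀ ^ 2, e * c₀ * d₀ - 1, c₀ ^ 2, c₀ * d₀, ?_, ?_⟩
    · have h : e * c₀ ^ 2 * (c₀ * d₀) - (e * c₀ * d₀ - 1) * c₀ ^ 2 = c₀ ^ 2 := by ring
      rw [h]
      exact pow_ne_zero 2 hc
    · intro x hx
      have hne : c₀ * (c₀ * x + d₀) ≠ 0 := mul_ne_zero hc (hpos x hx).ne'
      have hden : c₀ ^ 2 * x + c₀ * d₀ ≠ 0 := by
        have h : c₀ ^ 2 * x + c₀ * d₀ = c₀ * (c₀ * x + d₀) := by ring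
        rw [h]; exact hne
      have hX : c₀ * x + d₀ ≠ 0 := (hpos x hx).ne'
      rw [hgx x hx]
      field_simp
      ring

lemma schwarzian_neg (g : ℝ → ℝ) (x : ℝ) : schwarzian (fun y => -g y) x = schwarzian g x := by
  have h1 : (deriv fun y => -g y) = fun y => -deriv g y := funext fun y => deriv.neg
  have h2 : (deriv fun y => -deriv g y) = fun y => -deriv (deriv g) y :=
    funext fun y => deriv.neg
  have h3 : (deriv fun y => -deriv (deriv g) y) = fun y => -deriv (deriv (deriv g)) y :=
    funext fun y => deriv.neg
  simp only [schwarzian, h1, h2, h3]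
  rw [neg_div_neg_eq, neg_div_neg_eq]

/-- A smooth function on an open interval with nowhere-vanishing derivative and
identically vanishing Schwarzian derivative is the restriction of a Möbius
transformation. -/
theorem mobius_of_schwarzian_eq_zero (s : Set ℝ) (hs : IsOpen s) (hconn : s.OrdConnected)
    (g : ℝ → ℝ) (hg : ContDiffOn ℝ (⊤ : ℕ∞) g s) (hg' : ∀ x ∈ s, deriv g x ≠ 0)
    (hS : ∀ x ∈ s, schwarzian g x = 0) :
    ∃ a b c d : ℝ, a * d - b * c ≠ 0 ∧ ∀ x ∈ s, g x = (a * x + b) / (c * x + d) := by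
  rcases Set.eq_empty_or_nonempty s with rfl | ⟨x₀, hx₀⟩
  · exact ⟨1, 0, 0, 1, by norm_num, by simp⟩
  have hconv : Convex ℝ s := hconn.convex
  have hcont : ContinuousOn (deriv g) s := ((hg.deriv_of_isOpen hs (by simp) : ContDiffOn ℝ (⊤ : ℕ∞) (deriv g) s)).continuousOn
  by_cases hp : ∀ x ∈ s, 0 < deriv g x
  · exact mobius_aux s hs hconv hx₀ g hg hp hS
  · push_neg at hp
    obtain ⟨y, hy, hylt⟩ := hp
    have hyneg : deriv g y < 0 := lt_of_le_of_ne hylt (hg' y hy)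
    have hneg : ∀ x ∈ s, deriv g x < 0 := by
      intro x hx
      by_contra h
      have hxpos : 0 < deriv g x := lt_of_le_of_ne (not_lt.1 h) (Ne.symm (hg' x hx))
      obtain ⟨z, hz, hz0⟩ := hconv.isPreconnected.intermediate_value hy hx hcont
        (⟨le_of_lt hyneg, le_of_lt hxpos⟩ : (0 : ℝ) ∈ Set.Icc (deriv g y) (deriv g x))
      exact hg' z hz hz0
    have hgneg : ContDiffOn ℝ (⊤ : ℕ∞) (fun y => -g y) s := hg.neg
    have hd : ∀ x ∈ s, 0 < deriv (fun y => -g y) x := by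
      intro x hx
      rw [deriv.fun_neg]
      linarith [hneg x hx]
    have hSneg : ∀ x ∈ s, schwarzian (fun y => -g y) x = 0 := fun x hx =>
      (schwarzian_neg g x).trans (hS x hx)
    obtain ⟨a, b, c, d, h0, heq⟩ := mobius_aux s hs hconv hx₀ _ hgneg hd hSneg
    refine ⟨-a, -b, c, d, ?_, ?_⟩
    · rw [show -a * d - -b * c = -(a * d - b * c) by ring]
      exact neg_ne_zero.2 h0
    · intro x hx
      have h := heq x hx
      have hg2 : g x = -((a * x + b) / (c * x + d)) := by linarith
      rw [hg2, show -a * x + -b = -(a * x + b) by ring, neg_div]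
end

section
/- If two smooth functions p and q on an interval I have nonvanishing derivatives and equal Schwarzian derivatives S(p) = S(q) on I, then there exists a Möbius transformation T with p = T ∘ q on I. -/
private lemma sch_id1 (b c w e : ℝ) (hw : w ≠ 0) :
    -(e * c / (2 * w)) / w ^ 2 = -(e * c) / (2 * w ^ 3) := by
  rw [neg_div, div_div]; ring_nf

private lemma sch_id2 (b c d w e : ℝ) (hw : w ≠ 0) (hb : b ≠ 0) (h2 : w ^ 2 = e * b) :
    (-(e * d) * (2 * w ^ 3) - -(e * c) * (2 * (3 * w ^ 2 * (e * c / (2 * w))))) / (2 * w ^ 3) ^ 2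
      = -(d / b - 3 / 2 * (c / b) ^ 2) / 2 * w⁻¹ := by
  field_simp
  linear_combination (2*d*w^2*b - 3*c^2*(w^2+e*b)) * h2

private lemma sch_id3 (a b c d w e : ℝ) (hw : w ≠ 0) (hb : b ≠ 0) (h2 : w ^ 2 = e * b) :
    c * w⁻¹ + b * (-(e * c) / (2 * w ^ 3)) + (b * (-(e * c) / (2 * w ^ 3)) + a * (-(d / b - 3 / 2 * (c / b) ^ 2) / 2 * w⁻¹))
      = -(d / b - 3 / 2 * (c / b) ^ 2) / 2 * (a * w⁻¹) := by
  field_simp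
  linear_combination (4*c*b^2) * h2

private lemma sch_id4 (a b c w e : ℝ) (hw : w ≠ 0) (h2 : w ^ 2 = e * b) (he : e * e = 1) :
    (a * w⁻¹) * (-(e * c) / (2 * w ^ 3)) - (b * w⁻¹ + a * (-(e * c) / (2 * w ^ 3))) * w⁻¹ = -e := by
  field_simp
  linear_combination (e*2*w^2) * h2 + (b*w^2*2) * he

lemma schwarzian_basis (s : Set ℝ) (hs : IsOpen s) (f : ℝ → ℝ)
    (hf : ContDiffOn ℝ (⊤ : ℕ∞) f s) (ε : ℝ) (hε : ε * ε = 1)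
    (hpos : ∀ x ∈ s, 0 < ε * deriv f x) :
    ∃ Y1 Y2 Y1' Y2' : ℝ → ℝ,
      (∀ x ∈ s, Y2 x ≠ 0) ∧
      (∀ x ∈ s, f x = Y1 x / Y2 x) ∧
      (∀ x ∈ s, Y1 x * Y2' x - Y1' x * Y2 x = -ε) ∧
      (∀ x ∈ s, HasDerivAt Y1 (Y1' x) x) ∧
      (∀ x ∈ s, HasDerivAt Y2 (Y2' x) x) ∧
      (∀ x ∈ s, HasDerivAt Y1' (-(schwarzian f x) / 2 * Y1 x) x) ∧
      (∀ x ∈ s, HasDerivAt Y2' (-(schwarzian f x) / 2 * Y2 x) x) := by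
  have hd : ∀ g : ℝ → ℝ, ContDiffOn ℝ (⊤ : ℕ∞) g s → ∀ x ∈ s, HasDerivAt g (deriv g x) x :=
    fun g hg x hx =>
      ((hg.differentiableOn (by simp)).differentiableAt (hs.mem_nhds hx)).hasDerivAt
  set F1 := deriv f with hF1def
  set F2 := deriv F1 with hF2def
  set F3 := deriv F2 with hF3def
  have hF1 : ContDiffOn ℝ (⊤ : ℕ∞) F1 s := hf.deriv_of_isOpen hs (by simp)
  have hF2 : ContDiffOn ℝ (⊤ : ℕ∞) F2 s := hF1.deriv_of_isOpen hs (by simp)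
  set u := fun x => Real.sqrt (ε * F1 x) with hudef
  have hupos : ∀ x ∈ s, 0 < u x := fun x hx => Real.sqrt_pos.2 (hpos x hx)
  have hu2 : ∀ x ∈ s, u x ^ 2 = ε * F1 x := fun x hx => Real.sq_sqrt (hpos x hx).le
  have hF1ne : ∀ x ∈ s, F1 x ≠ 0 := by
    intro x hx h
    have := hpos x hx
    rw [h, mul_zero] at this
    exact lt_irrefl 0 this
  have hu' : ∀ x ∈ s, HasDerivAt u (ε * F2 x / (2 * u x)) x := by
    intro x hx
    have h1 : HasDerivAt (fun y => ε * F1 y) (ε * F2 x) x :=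
      (hd F1 hF1 x hx).const_mul ε
    have h2 := (Real.hasDerivAt_sqrt (ne_of_gt (hpos x hx))).comp x h1
    refine h2.congr_deriv ?_
    simp only [hudef]
    ring
  have hY2 : ∀ x ∈ s, HasDerivAt (fun y => (u y)⁻¹) (-(ε * F2 x) / (2 * u x ^ 3)) x := by
    intro x hx
    have h := (hu' x hx).inv (hupos x hx).ne'
    refine h.congr_deriv (Eq.symm ?_)
    exact (sch_id1 (F1 x) (F2 x) (u x) ε (hupos x hx).ne').symm
  have hY2' : ∀ x ∈ s, HasDerivAt (fun y => -(ε * F2 y) / (2 * u y ^ 3))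
      (-(schwarzian f x) / 2 * (u x)⁻¹) x := by
    intro x hx
    have hnum : HasDerivAt (fun y => -(ε * F2 y)) (-(ε * F3 x)) x :=
      ((hd F2 hF2 x hx).const_mul ε).neg
    have hden : HasDerivAt (fun y => 2 * u y ^ 3)
        (2 * (3 * u x ^ 2 * (ε * F2 x / (2 * u x)))) x := by
      have := ((hu' x hx).pow 3).const_mul 2
      refine this.congr_deriv ?_
      norm_num
    have hdne : 2 * u x ^ 3 ≠ 0 := by have := hupos x hx; positivity
    have h := hnum.div hden hdne
    refine h.congr_deriv (Eq.symm ?_)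
    exact (sch_id2 (F1 x) (F2 x) (F3 x) (u x) ε (hupos x hx).ne' (hF1ne x hx) (hu2 x hx)).symm
  refine ⟨fun x => f x * (u x)⁻¹, fun x => (u x)⁻¹,
    fun x => F1 x * (u x)⁻¹ + f x * (-(ε * F2 x) / (2 * u x ^ 3)),
    fun x => -(ε * F2 x) / (2 * u x ^ 3), ?_, ?_, ?_, ?_, ?_, ?_, ?_⟩
  · exact fun x hx => inv_ne_zero (hupos x hx).ne'
  · intro x hx
    field_simp
    rw [mul_div_cancel_right₀ _ (hupos x hx).ne']
  · intro x hx
    exact sch_id4 (f x) (F1 x) (F2 x) (u x) ε (hupos x hx).ne' (hu2 x hx) hε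
  · intro x hx
    exact (hd f hf x hx).mul (hY2 x hx)
  · exact hY2
  · intro x hx
    have h1 : HasDerivAt (fun y => F1 y * (u y)⁻¹)
        (F2 x * (u x)⁻¹ + F1 x * (-(ε * F2 x) / (2 * u x ^ 3))) x :=
      (hd F1 hF1 x hx).mul (hY2 x hx)
    have h2 : HasDerivAt (fun y => f y * (-(ε * F2 y) / (2 * u y ^ 3)))
        (F1 x * (-(ε * F2 x) / (2 * u x ^ 3)) + f x * (-(schwarzian f x) / 2 * (u x)⁻¹)) x :=
      (hd f hf x hx).mul (hY2' x hx)
    have h := h1.add h2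
    refine h.congr_deriv (Eq.symm ?_)
    exact (sch_id3 (f x) (F1 x) (F2 x) (F3 x) (u x) ε (hupos x hx).ne' (hF1ne x hx) (hu2 x hx)).symm
  · exact hY2'

lemma sign_const (s : Set ℝ) (hs : IsOpen s) (hconv : Convex ℝ s) (f : ℝ → ℝ)
    (hf : ContDiffOn ℝ (⊤ : ℕ∞) f s) (hf' : ∀ x ∈ s, deriv f x ≠ 0)
    (x0 : ℝ) (hx0 : x0 ∈ s) :
    ∃ ε : ℝ, ε * ε = 1 ∧ ∀ x ∈ s, 0 < ε * deriv f x := by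
  have hcont : ContinuousOn (deriv f) s := hf.continuousOn_deriv_of_isOpen hs (by simp)
  by_cases h0 : 0 < deriv f x0
  · refine ⟨1, by norm_num, ?_⟩
    intro x hx
    rw [one_mul]
    rcases (hf' x hx).lt_or_gt with hneg | hposx
    · exfalso
      have hsub : Set.uIcc x x0 ⊆ s := hconv.ordConnected.uIcc_subset hx hx0
      have h0mem : (0 : ℝ) ∈ Set.uIcc (deriv f x) (deriv f x0) :=
        Set.mem_uIcc.2 (Or.inl ⟨hneg.le, h0.le⟩)
      obtain ⟨c, hc, hc0⟩ := intermediate_value_uIcc (hcont.mono hsub) h0mem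
      exact hf' c (hsub hc) hc0
    · exact hposx
  · have h0' : deriv f x0 < 0 := (hf' x0 hx0).lt_or_gt.resolve_right h0
    refine ⟨-1, by norm_num, ?_⟩
    intro x hx
    rcases (hf' x hx).lt_or_gt with hneg | hposx
    · simpa using hneg
    · exfalso
      have hsub : Set.uIcc x x0 ⊆ s := hconv.ordConnected.uIcc_subset hx hx0
      have h0mem : (0 : ℝ) ∈ Set.uIcc (deriv f x) (deriv f x0) :=
        Set.mem_uIcc.2 (Or.inr ⟨h0'.le, hposx.le⟩)
      obtain ⟨c, hc, hc0⟩ := intermediate_value_uIcc (hcont.mono hsub) h0mem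
      exact hf' c (hsub hc) hc0

/-- Two smooth functions on an interval with nonvanishing derivatives and equal
Schwarzian derivatives differ by post-composition with a Möbius transformation. -/
theorem eq_mobius_comp_of_schwarzian_eq (s : Set ℝ) (hs : IsOpen s)
    (hconn : s.OrdConnected) (p q : ℝ → ℝ)
    (hp : ContDiffOn ℝ (⊤ : ℕ∞) p s) (hq : ContDiffOn ℝ (⊤ : ℕ∞) q s)
    (hp' : ∀ x ∈ s, deriv p x ≠ 0) (hq' : ∀ x ∈ s, deriv q x ≠ 0)
    (hS : ∀ x ∈ s, schwarzian p x = schwarzian q x) :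
    ∃ a b c d : ℝ, a * d - b * c ≠ 0 ∧
      ∀ x ∈ s, p x = (a * q x + b) / (c * q x + d) := by
  rcases s.eq_empty_or_nonempty with rfl | ⟨x0, hx0⟩
  · exact ⟨1, 0, 0, 1, by norm_num, fun x hx => absurd hx (Set.notMem_empty x)⟩
  have hconv : Convex ℝ s := hconn.convex
  obtain ⟨ε, hε, hpp⟩ := sign_const s hs hconv p hp hp' x0 hx0
  obtain ⟨δ, hδ, hqp⟩ := sign_const s hs hconv q hq hq' x0 hx0
  obtain ⟨Y1, Y2, Y1', Y2', hY2ne, hpY, hWp, hdY1, hdY2, hdY1', hdY2'⟩ :=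
    schwarzian_basis s hs p hp ε hε hpp
  obtain ⟨Z1, Z2, Z1', Z2', hZ2ne, hqZ, hWq, hdZ1, hdZ2, hdZ1', hdZ2'⟩ :=
    schwarzian_basis s hs q hq δ hδ hqp
  have hεne : ε ≠ 0 := by intro h; rw [h] at hε; norm_num at hε
  have hδne : δ ≠ 0 := by intro h; rw [h] at hδ; norm_num at hδ
  -- Wronskians of solutions of the same linear ODE are constant
  have const : ∀ A A' B B' : ℝ → ℝ, (∀ x ∈ s, HasDerivAt A (A' x) x) →
      (∀ x ∈ s, HasDerivAt A' (-(schwarzian p x) / 2 * A x) x) →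
      (∀ x ∈ s, HasDerivAt B (B' x) x) →
      (∀ x ∈ s, HasDerivAt B' (-(schwarzian q x) / 2 * B x) x) →
      ∀ x ∈ s, A x * B' x - A' x * B x = A x0 * B' x0 - A' x0 * B x0 := by
    intro A A' B B' hA hA' hB hB' x hx
    set W := fun y => A y * B' y - A' y * B y with hWdef
    have hW : ∀ y ∈ s, HasDerivAt W 0 y := by
      intro y hy
      have h := ((hA y hy).mul (hB' y hy)).sub ((hA' y hy).mul (hB y hy))
      refine h.congr_deriv ?_
      rw [hS y hy]
      ring
    have hdiff : DifferentiableOn ℝ W s :=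
      fun y hy => ((hW y hy).differentiableAt).differentiableWithinAt
    have hfd : ∀ y ∈ s, fderivWithin ℝ W s y = 0 := by
      intro y hy
      rw [fderivWithin_of_isOpen hs hy, (hW y hy).hasFDerivAt.fderiv]
      ext t
      simp
    exact hconv.is_const_of_fderivWithin_eq_zero hdiff hfd hx hx0
  have h11 := const Y1 Y1' Z1 Z1' hdY1 hdY1' hdZ1 hdZ1'
  have h12 := const Y1 Y1' Z2 Z2' hdY1 hdY1' hdZ2 hdZ2'
  have h21 := const Y2 Y2' Z1 Z1' hdY2 hdY2' hdZ1 hdZ1'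
  have h22 := const Y2 Y2' Z2 Z2' hdY2 hdY2' hdZ2 hdZ2'
  set w11 := Y1 x0 * Z1' x0 - Y1' x0 * Z1 x0 with hw11def
  set w12 := Y1 x0 * Z2' x0 - Y1' x0 * Z2 x0 with hw12def
  set w21 := Y2 x0 * Z1' x0 - Y2' x0 * Z1 x0 with hw21def
  set w22 := Y2 x0 * Z2' x0 - Y2' x0 * Z2 x0 with hw22def
  refine ⟨w12, -w11, w22, -w21, ?_, ?_⟩
  · have hdet : w12 * (-w21) - (-w11) * w22 = ε * δ := by
      linear_combination (Z1 x0 * Z2' x0 - Z1' x0 * Z2 x0) * hWp x0 hx0 + (-ε) * hWq x0 hx0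
    rw [hdet]
    exact mul_ne_zero hεne hδne
  · intro x hx
    have key1 : w12 * Z1 x - w11 * Z2 x = -δ * Y1 x := by
      linear_combination (-(Z1 x)) * h12 x hx + (Z2 x) * h11 x hx + (Y1 x) * hWq x hx
    have key2 : w22 * Z1 x - w21 * Z2 x = -δ * Y2 x := by
      linear_combination (-(Z1 x)) * h22 x hx + (Z2 x) * h21 x hx + (Y2 x) * hWq x hx
    rw [hpY x hx, hqZ x hx]
    have hZ2 := hZ2ne x hx
    have hY2 := hY2ne x hx
    have e1 : w12 * (Z1 x / Z2 x) + -w11 = -δ * Y1 x / Z2 x := by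
      field_simp
      linear_combination key1
    have e2 : w22 * (Z1 x / Z2 x) + -w21 = -δ * Y2 x / Z2 x := by
      field_simp
      linear_combination key2
    rw [e1, e2]
    field_simp
end

section
/- Let R : V → Hom(V,V) assign to each nonzero y a linear map with matrix R^h_{jk}(y) (bilinear in suppressed indices) satisfying R^h_k(y) yᵏ = 0 and R^h_{jk} = F(y)^{-2}(y_j R^h_k - y_k R^h_j) where y_j = g_{jm} yᵐ and F(y)² = g_{jm} yʲ yᵐ > 0. Then R^h_j = 0 and hence R^h_{jk} = 0. -/
open Finset

/-- Linear-algebra core of the integrability theorem: if `R^h_k yᵏ = 0`,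
`R^h_j = R^h_{jk} yᵏ` and `R^h_{jk} = F⁻²(y_j R^h_k − y_k R^h_j)` with
`F² = g_{jm} yʲ yᵐ > 0`, then `R^h_j = 0` and `R^h_{jk} = 0`. -/
theorem curvature_vanishes_of_Z_relation {n : ℕ}
    (g : Fin n → Fin n → ℝ) (y : Fin n → ℝ) (F : ℝ)
    (hF2 : F ^ 2 = ∑ j, ∑ m, g j m * y j * y m) (hF : 0 < F)
    (R : Fin n → Fin n → Fin n → ℝ) (Rk : Fin n → Fin n → ℝ)
    (hcontr : ∀ h j, Rk h j = ∑ k, R h j k * y k)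
    (hzero : ∀ h, ∑ k, Rk h k * y k = 0)
    (hrel : ∀ h j k, R h j k =
      (F ^ 2)⁻¹ * ((∑ m, g j m * y m) * Rk h k - (∑ m, g k m * y m) * Rk h j)) :
    (∀ h j, Rk h j = 0) ∧ ∀ h j k, R h j k = 0 := by
  have hF2pos : (0:ℝ) < F ^ 2 := by positivity
  have hFsum : ∑ k, (∑ m, g k m * y m) * y k = F ^ 2 := by
    rw [hF2]
    refine Finset.sum_congr rfl fun k _ => ?_
    rw [Finset.sum_mul]
    exact Finset.sum_congr rfl fun m _ => by ring
  have hRk : ∀ h j, Rk h j = 0 := by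
    intro h j
    have h1 := hcontr h j
    simp_rw [hrel h j] at h1
    have e1 : ∑ k, (F ^ 2)⁻¹ *
        ((∑ m, g j m * y m) * Rk h k - (∑ m, g k m * y m) * Rk h j) * y k
        = (F ^ 2)⁻¹ * ((∑ m, g j m * y m) * (∑ k, Rk h k * y k)
          - (∑ k, (∑ m, g k m * y m) * y k) * Rk h j) := by
      rw [Finset.mul_sum, Finset.sum_mul, ← Finset.sum_sub_distrib, Finset.mul_sum]
      exact Finset.sum_congr rfl fun k _ => by ring
    rw [e1, hzero h, hFsum] at h1
    field_simp at h1
    nlinarith [hF2pos, sq_nonneg (Rk h j)]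
  refine ⟨hRk, fun h j k => ?_⟩
  rw [hrel h j k, hRk h j, hRk h k]
  ring
end
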